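/- Let A = ℝ[X,Y]/(X³Y, X²Y², Y⁴, X³−Y³). For every real number t > 0 there exists an ℝ-algebra automorphism φ of A whose induced map on 𝔫/𝔫² has determinant t. Consequently, the determinant map 𝔇₁ : Aut(A) → (0,∞) is surjective. -/

import Mathlib

/-- The Weil algebra `A = ℝ[X,Y]/(X³Y, X²Y², Y⁴, X³−Y³)`. -/
noncomputable abbrev WB : Type :=
  MvPolynomial (Fin 2) ℝ ⧸
    (Ideal.span {(MvPolynomial.X 0 : MvPolynomial (Fin 2) ℝ) ^ 3 * MvPolynomial.X 1,
      (MvPolynomial.X 0) ^ 2 * (MvPolynomial.X 1) ^ 2, (MvPolynomial.X 1) ^ 4,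
      (MvPolynomial.X 0) ^ 3 - (MvPolynomial.X 1) ^ 3} : Ideal (MvPolynomial (Fin 2) ℝ))

/-- The residue class of `X`. -/
noncomputable def bx : WB := Ideal.Quotient.mk _ (MvPolynomial.X 0)

/-- The residue class of `Y`. -/
noncomputable def bY : WB := Ideal.Quotient.mk _ (MvPolynomial.X 1)

/-- The maximal (nilpotent) ideal `𝔫 = (X, Y)` of `A`. -/
noncomputable def mIdeal : Ideal WB := Ideal.span {bx, bY}

/-! The relations `X³Y, X²Y², Y⁴, X³ − Y³` are homogeneous, so the ideal they generate is stable
under `X ↦ aX, Y ↦ aY`; for `a ≠ 0` this induces an automorphism of `A` acting on `𝔫/𝔫²` as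
`a · Id`, whose determinant `a²` is any prescribed `t > 0` for `a = √t`. -/

namespace MvPolynomial

variable {σ R : Type*} [CommRing R]

noncomputable def scaleVars (a : R) : MvPolynomial σ R →ₐ[R] MvPolynomial σ R :=
  aeval fun i => a • X i

@[simp]
lemma scaleVars_X (a : R) (i : σ) : scaleVars a (X i : MvPolynomial σ R) = a • X i :=
  aeval_X _ _

lemma scaleVars_monomial (a : R) (d : σ →₀ ℕ) (c : R) :
    scaleVars a (monomial d c) = a ^ d.degree • monomial d c := by
  have hC : (d.prod fun _ k => (C a : MvPolynomial σ R) ^ k) = C (a ^ d.degree) := by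
    rw [Finsupp.prod, Finset.prod_pow_eq_pow_sum, ← Finsupp.degree_apply, map_pow]
  rw [scaleVars, aeval_monomial]
  simp only [smul_eq_C_mul, mul_pow, Finsupp.prod_mul, hC, monomial_eq, algebraMap_eq]
  ring

lemma IsHomogeneous.scaleVars_eq {p : MvPolynomial σ R} {n : ℕ} (hp : p.IsHomogeneous n) (a : R) :
    scaleVars a p = a ^ n • p := by
  conv_lhs => rw [p.as_sum]
  conv_rhs => rw [p.as_sum]
  rw [map_sum, Finset.smul_sum]
  refine Finset.sum_congr rfl fun d hd => ?_
  rw [scaleVars_monomial, hp.degree_eq_sum_deg_support hd, Finsupp.degree_apply]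

lemma span_le_comap_scaleVars {S : Set (MvPolynomial σ R)}
    (hS : ∀ p ∈ S, ∃ n, p.IsHomogeneous n) (a : R) :
    Ideal.span S ≤ (Ideal.span S).comap (scaleVars a) := by
  rw [Ideal.span_le]
  intro p hp
  obtain ⟨n, hn⟩ := hS p hp
  rw [SetLike.mem_coe, Ideal.mem_comap, hn.scaleVars_eq, smul_eq_C_mul]
  exact Ideal.mul_mem_left _ _ (Ideal.subset_span hp)

section Quotient

variable {S : Set (MvPolynomial σ R)} (hS : ∀ p ∈ S, ∃ n, p.IsHomogeneous n)

noncomputable def quotientScaleVars (a : R) :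
    (MvPolynomial σ R ⧸ Ideal.span S) →ₐ[R] MvPolynomial σ R ⧸ Ideal.span S :=
  Ideal.quotientMapₐ _ (scaleVars a) (span_le_comap_scaleVars hS a)

lemma quotientScaleVars_mk_X (a : R) (i : σ) :
    quotientScaleVars hS a (Ideal.Quotient.mk _ (X i)) = a • Ideal.Quotient.mk _ (X i) := by
  rw [quotientScaleVars, Ideal.quotient_map_mkₐ, scaleVars_X, map_smul, Ideal.Quotient.mkₐ_eq_mk]

lemma quotientScaleVars_comp (a b : R) :
    (quotientScaleVars hS a).comp (quotientScaleVars hS b) = quotientScaleVars hS (a * b) := by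
  refine Ideal.Quotient.algHom_ext _ (MvPolynomial.algHom_ext fun i => ?_)
  simp [quotientScaleVars_mk_X, smul_smul, mul_comm]

lemma quotientScaleVars_one : quotientScaleVars hS 1 = AlgHom.id R _ := by
  refine Ideal.Quotient.algHom_ext _ (MvPolynomial.algHom_ext fun i => ?_)
  simp [quotientScaleVars_mk_X]

noncomputable def quotientScaleVarsEquiv (a : Rˣ) :
    (MvPolynomial σ R ⧸ Ideal.span S) ≃ₐ[R] MvPolynomial σ R ⧸ Ideal.span S :=
  AlgEquiv.ofAlgHom (quotientScaleVars hS a) (quotientScaleVars hS ↑a⁻¹)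
    (by rw [quotientScaleVars_comp, Units.mul_inv, quotientScaleVars_one])
    (by rw [quotientScaleVars_comp, Units.inv_mul, quotientScaleVars_one])

lemma quotientScaleVarsEquiv_mk_X (a : Rˣ) (i : σ) :
    quotientScaleVarsEquiv hS a (Ideal.Quotient.mk _ (X i)) =
      (a : R) • Ideal.Quotient.mk _ (X i) :=
  quotientScaleVars_mk_X hS a i

end Quotient

end MvPolynomial

open MvPolynomial

lemma weilRelations_isHomogeneous :
    ∀ p ∈ ({X 0 ^ 3 * X 1, X 0 ^ 2 * X 1 ^ 2, X 1 ^ 4, X 0 ^ 3 - X 1 ^ 3} :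
      Set (MvPolynomial (Fin 2) ℝ)), ∃ n, p.IsHomogeneous n := by
  simp only [Set.mem_insert_iff, Set.mem_singleton_iff, forall_eq_or_imp, forall_eq]
  exact ⟨⟨_, (isHomogeneous_X_pow _ 3).mul (isHomogeneous_X _ _)⟩,
    ⟨_, (isHomogeneous_X_pow _ 2).mul (isHomogeneous_X_pow _ 2)⟩, ⟨_, isHomogeneous_X_pow _ 4⟩,
    ⟨_, (isHomogeneous_X_pow _ 3).sub (isHomogeneous_X_pow _ 3)⟩⟩

/-- For every real `t > 0` there is an ℝ-algebra automorphism `φ` of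
`A = ℝ[X,Y]/(X³Y, X²Y², Y⁴, X³−Y³)` whose induced map on `𝔫/𝔫²` has determinant `t`:
namely, `φ(X) ≡ aX`, `φ(Y) ≡ aY` modulo `𝔫²` for some `a` with `a² = t` (the induced
map on `𝔫/𝔫²` is `a·Id`, of determinant `a²`).  Hence `𝔇₁ : Aut(A) → (0,∞)` is
surjective. -/
theorem stmt13 (t : ℝ) (ht : 0 < t) :
    ∃ (φ : WB ≃ₐ[ℝ] WB) (a : ℝ), a ^ 2 = t ∧
      φ bx - a • bx ∈ mIdeal ^ 2 ∧ φ bY - a • bY ∈ mIdeal ^ 2 := by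
  have ha : √t ≠ 0 := by positivity
  refine ⟨quotientScaleVarsEquiv weilRelations_isHomogeneous (Units.mk0 _ ha), √t,
    Real.sq_sqrt ht.le, ?_, ?_⟩ <;>
  simp only [bx, bY, quotientScaleVarsEquiv_mk_X, Units.val_mk0, sub_self, zero_mem]
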